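/- Let g, h ∈ K{{x,y} with ord_x(g) ≥ 1. Then there exists a unique map φ : K{{x,y} → K{{x,y} which is K-linear, commutes with every grafting operation •_m (m ≥ 2), maps 1_P to 1_P, satisfies φ(x) = g and φ(y) = h, and is continuous with respect to the x-adic topology. This φ is called the substitution homomorphism φ_{(g,h)} induced by (g,h). -/

import Mathlib

namespace Planar

inductive PVar : Type
  | vx : PVar
  | vy : PVar
deriving DecidableEq

/-- A finite planar reduced rooted tree: every internal vertex has at least two
(ordered) children, encoded as `node t₁ t₂ rest` with children list `t₁ :: t₂ :: rest`;
leaves are labeled by a variable (an isomorphism class of such a labeled tree is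
faithfully represented by this inductive data). -/
inductive PTree : Type
  | leaf : PVar → PTree
  | node : PTree → PTree → List PTree → PTree

namespace PTree

/-- The number of leaves carrying the label `v`. -/
def countLeaf (v : PVar) : PTree → ℕ
  | .leaf w => if w = v then 1 else 0
  | .node t1 t2 rest =>
      countLeaf v t1 + countLeaf v t2 + (rest.attach.map fun t => countLeaf v t.1).sum
decreasing_by
  all_goals simp_wf
  · omega
  · omega
  · have := List.sizeOf_lt_of_mem t.2
    omega

end PTree

/-- `P'(x,y)`: planar monomials plus the empty tree `1_P` (= `none`). -/
abbrev PT := Option PTree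

/-- `deg_x`: the number of leaves labeled `x`. -/
def degx (S : PT) : ℕ := S.elim 0 (PTree.countLeaf .vx)

/-- `deg_y`: the number of leaves labeled `y`. -/
def degy (S : PT) : ℕ := S.elim 0 (PTree.countLeaf .vy)

/-- `m`-ary grafting `•_m` on `P'(x,y)` (`m = l.length`): join the non-trivial entries
at a new root; the conventions `•_m(1_P,…,1_P) = 1_P`, dropping of `1_P`-entries and
`•_2(S,1_P) = •_2(1_P,S) = S` amount to discarding the `1_P`-entries first. -/
def graft (l : List PT) : PT :=
  match l.reduceOption with
  | [] => none
  | [t] => some t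
  | t1 :: t2 :: ts => some (.node t1 t2 ts)

variable (K : Type) [Field K]

/-- The algebra `K{{x,y}` of planar power series in `x` and polynomials in `y`:
functions on `P'(x,y)` such that for every `n` only finitely many monomials of
`x`-degree `n` have a nonzero coefficient. -/
def PSer : Type := {f : PT → K // ∀ n : ℕ, {S : PT | f S ≠ 0 ∧ degx S = n}.Finite}

variable {K}

namespace PSer

private lemma finite_add (f g : PSer K) (n : ℕ) :
    {S : PT | f.1 S + g.1 S ≠ 0 ∧ degx S = n}.Finite := by
  apply ((f.2 n).union (g.2 n)).subset
  rintro S ⟨hne, hdeg⟩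
  by_cases h1 : f.1 S = 0
  · exact Or.inr ⟨by simpa [h1] using hne, hdeg⟩
  · exact Or.inl ⟨h1, hdeg⟩

private lemma finite_neg (f : PSer K) (n : ℕ) :
    {S : PT | -f.1 S ≠ 0 ∧ degx S = n}.Finite := by
  apply (f.2 n).subset
  rintro S ⟨hne, hdeg⟩
  exact ⟨by simpa using hne, hdeg⟩

private lemma finite_zero (n : ℕ) :
    {S : PT | (0 : K) ≠ 0 ∧ degx S = n}.Finite := by
  convert Set.finite_empty using 1
  ext S; simp

private lemma finite_smul (a : K) (f : PSer K) (n : ℕ) :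
    {S : PT | a * f.1 S ≠ 0 ∧ degx S = n}.Finite := by
  apply (f.2 n).subset
  rintro S ⟨hne, hdeg⟩
  exact ⟨fun h => hne (by simp [h]), hdeg⟩

noncomputable instance : AddCommGroup (PSer K) where
  add f g := ⟨fun S => f.1 S + g.1 S, finite_add f g⟩
  zero := ⟨fun _ => 0, finite_zero⟩
  neg f := ⟨fun S => -f.1 S, finite_neg f⟩
  add_assoc f g h := Subtype.ext (funext fun S => add_assoc _ _ _)
  add_comm f g := Subtype.ext (funext fun S => add_comm _ _)
  zero_add f := Subtype.ext (funext fun S => zero_add _)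
  add_zero f := Subtype.ext (funext fun S => add_zero _)
  neg_add_cancel f := Subtype.ext (funext fun S => neg_add_cancel _)
  nsmul n f := ⟨fun S => (n : K) * f.1 S, finite_smul _ f⟩
  nsmul_zero f := Subtype.ext (funext fun S => by
    show ((0 : ℕ) : K) * f.1 S = (0 : K); simp)
  nsmul_succ n f := Subtype.ext (funext fun S => by
    show ((n + 1 : ℕ) : K) * f.1 S = (n : K) * f.1 S + f.1 S; push_cast; ring)
  zsmul n f := ⟨fun S => (n : K) * f.1 S, finite_smul _ f⟩
  zsmul_zero' f := Subtype.ext (funext fun S => by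
    show ((0 : ℤ) : K) * f.1 S = (0 : K); simp)
  zsmul_succ' n f := Subtype.ext (funext fun S => by
    show ((Int.ofNat n.succ : ℤ) : K) * f.1 S = ((Int.ofNat n : ℤ) : K) * f.1 S + f.1 S
    simp only [Int.ofNat_eq_coe]; push_cast; ring)
  zsmul_neg' n f := Subtype.ext (funext fun S => by
    show ((Int.negSucc n : ℤ) : K) * f.1 S = -(((n.succ : ℤ) : K) * f.1 S)
    simp [Int.negSucc_eq]; push_cast; ring)

noncomputable instance : Module K (PSer K) where
  smul a f := ⟨fun S => a * f.1 S, finite_smul a f⟩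
  one_smul f := Subtype.ext (funext fun S => one_mul _)
  mul_smul a b f := Subtype.ext (funext fun S => mul_assoc _ _ _)
  smul_zero a := Subtype.ext (funext fun S => mul_zero _)
  smul_add a f g := Subtype.ext (funext fun S => mul_add _ _ _)
  add_smul a b f := Subtype.ext (funext fun S => add_mul _ _ _)
  zero_smul f := Subtype.ext (funext fun S => zero_mul _)

@[simp] lemma add_coeff (f g : PSer K) (S : PT) : (f + g).1 S = f.1 S + g.1 S := rfl
@[simp] lemma smul_coeff (a : K) (f : PSer K) (S : PT) : (a • f).1 S = a * f.1 S := rfl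
@[simp] lemma zero_coeff (S : PT) : (0 : PSer K).1 S = 0 := rfl

end PSer

open PSer

/-- The indicator series of a single planar monomial `S ∈ P'(x,y)`. -/
noncomputable def mono (S : PT) : PSer K := by
  classical
  refine ⟨fun T => if T = S then 1 else 0, fun n => (Set.finite_singleton S).subset ?_⟩
  rintro T ⟨h1, -⟩
  by_contra hc
  exact h1 (if_neg (by simpa [Set.mem_singleton_iff] using hc))

/-- The unit series `1_P` (the empty tree). -/
noncomputable def onePS : PSer K := mono none

/-- The series `x` (the one-vertex tree labeled `x`). -/
noncomputable def Xps : PSer K := mono (some (.leaf .vx))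

/-- The series `y = dx` (the one-vertex tree labeled `y`). -/
noncomputable def Yps : PSer K := mono (some (.leaf .vy))

/-- Coefficient of the product `•_m(f₁,…,f_m)` at `S`: the (finite) sum of
`c_{S₁}(f₁)⋯c_{S_m}(f_m)` over all decompositions `S = •_m(S₁,…,S_m)`. -/
noncomputable def bulletCoeff (fs : List (PSer K)) (S : PT) : K :=
  ∑ᶠ t ∈ {t : List PT | t.length = fs.length ∧ graft t = S},
    (List.zipWith (fun f u => f.1 u) fs t).prod

open Classical in
/-- The `m`-ary product `•_m(f₁,…,f_m)` on `K{{x,y}` (`m = fs.length`). -/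
noncomputable def bullet (fs : List (PSer K)) : PSer K :=
  if h : ∀ n : ℕ, {S : PT | bulletCoeff fs S ≠ 0 ∧ degx S = n}.Finite
  then ⟨bulletCoeff fs, h⟩ else 0

/-- The `x`-order `ord_x(f) ∈ ℕ ∪ {∞}`: the least `x`-degree of a monomial with
nonzero coefficient (`∞` for `f = 0`). -/
noncomputable def ordx (f : PSer K) : ℕ∞ :=
  ⨅ S ∈ {S : PT | f.1 S ≠ 0}, (degx S : ℕ∞)

/-- The `x`-adic absolute value `|f|ₓ = (1/2)^{ord_x f}` (`= 0` for `f = 0`). -/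
noncomputable def normx (f : PSer K) : ℝ :=
  if ordx f = ⊤ then 0 else (2⁻¹ : ℝ) ^ (ordx f).toNat

/-- The `x`-adic distance `|f - g|ₓ`. -/
noncomputable def distx (f g : PSer K) : ℝ := normx (f - g)

/-- A Cauchy sequence for the `x`-adic distance. -/
def IsCauchySeq (u : ℕ → PSer K) : Prop :=
  ∀ ε : ℝ, 0 < ε → ∃ N : ℕ, ∀ p q : ℕ, N ≤ p → N ≤ q → distx (u p) (u q) < ε

/-- Convergence of a sequence to `f` for the `x`-adic distance. -/
def TendstoSeq (u : ℕ → PSer K) (f : PSer K) : Prop :=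
  ∀ ε : ℝ, 0 < ε → ∃ N : ℕ, ∀ p : ℕ, N ≤ p → distx (u p) f < ε

/-- Continuity of a map between two spaces equipped with distance functions. -/
def ContWrt {α β : Type*} (dα : α → α → ℝ) (dβ : β → β → ℝ) (φ : α → β) : Prop :=
  ∀ a : α, ∀ ε : ℝ, 0 < ε → ∃ δ : ℝ, 0 < δ ∧ ∀ b : α, dα b a < δ → dβ (φ b) (φ a) < ε

/-- The property of being supported on monomials all of whose leaves are labeled `x`. -/
def OnlyX (f : PSer K) : Prop := ∀ S : PT, f.1 S ≠ 0 → degy S = 0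

variable (K) in
/-- `K{{x}}`, the closed unital subalgebra of `K{{x,y}` generated by `x`, as a
submodule: the series supported on `1_P` and trees all of whose leaves are labeled `x`. -/
noncomputable def kxSub : Submodule K (PSer K) where
  carrier := {f | OnlyX f}
  add_mem' := by
    intro f g hf hg S hS
    by_cases h1 : f.1 S = 0
    · exact hg S (by simpa [h1] using hS)
    · exact hf S h1
  zero_mem' := by intro S hS; simp at hS
  smul_mem' := by
    intro a f hf S hS
    exact hf S (fun h => hS (by simp [h]))

variable (K) in
/-- The space `K{{x}}` of planar power series in `x`. -/
abbrev Kx : Type _ := ↥(kxSub K)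

@[simp] lemma mem_kxSub {f : PSer K} : f ∈ kxSub K ↔ OnlyX f := Iff.rfl

/-- The `x`-adic distance on `K{{x}}`. -/
noncomputable def distKx (f g : Kx K) : ℝ := distx f.1 g.1

lemma onePS_mem_kxSub : onePS ∈ kxSub (K := K) := by
  intro S hS
  by_cases h : S = none
  · subst h; rfl
  · exact absurd (if_neg h) hS

lemma Xps_mem_kxSub : Xps ∈ kxSub (K := K) := by
  intro S hS
  by_cases h : S = some (.leaf .vx)
  · subst h; simp [degy, PTree.countLeaf]
  · exact absurd (if_neg h) hS

/-- `1_P` as an element of `K{{x}}`. -/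
noncomputable def oneX : Kx K := ⟨onePS, onePS_mem_kxSub⟩

/-- `x` as an element of `K{{x}}`. -/
noncomputable def xX : Kx K := ⟨Xps, Xps_mem_kxSub⟩

open Classical in
/-- The `m`-ary product `•_m` on `K{{x}}` (`m = fs.length`). -/
noncomputable def bulletX (fs : List (Kx K)) : Kx K :=
  if h : bullet (fs.map (fun f => f.1)) ∈ kxSub K
  then ⟨bullet (fs.map (fun f => f.1)), h⟩ else 0

open Classical in
/-- The homogeneous component of degree `n` (w.r.t. `deg_x`) of a planar power series. -/
noncomputable def comp (f : PSer K) (n : ℕ) : PSer K :=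
  ⟨fun S => if degx S = n then f.1 S else 0, by
    intro m
    apply (f.2 m).subset
    rintro S ⟨h1, h2⟩
    refine ⟨?_, h2⟩
    by_cases hd : degx S = n
    · simpa [hd] using h1
    · simp [hd] at h1⟩

/-- The homogeneous component of degree `n` of an element of `K{{x}}`. -/
noncomputable def compX (f : Kx K) (n : ℕ) : Kx K :=
  ⟨comp f.1 n, by
    intro S hS
    apply (mem_kxSub.mp f.2) S
    simp only [comp] at hS
    by_cases hd : degx S = n
    · simpa [hd] using hS
    · simp [hd] at hS⟩

/-- A substitution homomorphism `φ_{(g,h)} : K{{x,y} → K{{x,y}`: `K`-linear, compatible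
with all grafting operations `•_m` (`m ≥ 2`), unital, `x ↦ g`, `y ↦ h`, and continuous
for the `x`-adic topology. -/
structure IsSubstHom (g h : PSer K) (φ : PSer K → PSer K) : Prop where
  linear : IsLinearMap K φ
  map_graft : ∀ fs : List (PSer K), 2 ≤ fs.length → φ (bullet fs) = bullet (fs.map φ)
  map_one : φ onePS = onePS
  map_X : φ Xps = g
  map_Y : φ Yps = h
  cont : ContWrt distx distx φ

/-- A substitution homomorphism `φ_g : K{{x}} → K{{x}}` with `x ↦ g`. -/
structure IsSubstHomX (g : Kx K) (φ : Kx K → Kx K) : Prop where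
  linear : IsLinearMap K φ
  map_graft : ∀ fs : List (Kx K), 2 ≤ fs.length → φ (bulletX fs) = bulletX (fs.map φ)
  map_one : φ oneX = oneX
  map_X : φ xX = g
  cont : ContWrt distKx distKx φ

/-- The universal derivation `d : K{{x}} → K{{x,y}`: continuous, `K`-linear, `d x = y`,
and satisfying the Leibniz rule for every grafting operation `•_m` (`m ≥ 2`). -/
structure IsUDeriv (d : Kx K → PSer K) : Prop where
  linear : IsLinearMap K d
  cont : ContWrt distKx distx d
  map_X : d xX = Yps
  leibniz : ∀ fs : List (Kx K), 2 ≤ fs.length →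
    d (bulletX fs) = ∑ i : Fin fs.length,
      bullet ((fs.map (fun f => f.1)).set i.1 (d (fs.get i)))

/-- The `k`-ary planar exponential series `Exp_k(x)`: constant coefficient `1`,
coefficient `1` at `x`, and `Exp_k(kx) = •_k(Exp_k(x),…,Exp_k(x))`. -/
structure IsExp (k : ℕ) (f : Kx K) : Prop where
  coeff_one : f.1.1 none = 1
  coeff_X : f.1.1 (some (.leaf .vx)) = 1
  funEq : ∀ φ : Kx K → Kx K, IsSubstHomX ((k : K) • xX) φ →
    φ f = bulletX (List.replicate k f)

/-- `ℓ = Log_k(1+x)`, the planar logarithm attached to a planar exponential series `e`: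
`ord_x ℓ ≥ 1` and `ℓ(e - 1) = x`. -/
structure IsLogOf (e ℓ : Kx K) : Prop where
  ord : 1 ≤ ordx ℓ.1
  eq : ∀ φ : Kx K → Kx K, IsSubstHomX (e - oneX) φ → φ ℓ = xX

end Planar

/-!
The image `S(g, h)` (`substMono g h S`) of a monomial is forced: leaves go to `g` and `h`, and
a node goes to the grafting of the images of its subtrees. Since `ord_x g ≥ 1`, the series
`S(g, h)` only involves monomials of `x`-degree at least `deg_x S`, so
`φ f = ∑_S c_S(f) S(g, h)` (`substMap`) is coefficientwise a finite sum, and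
`ord_x (φ f) ≥ ord_x f` makes `φ` continuous. Compatibility with `•_m` is multilinear expansion
of the coefficient formula for `•_m`, once one knows that `•_m` drops `1_P`-arguments of series
as it does for trees. Conversely, a substitution homomorphism agrees with `φ` on monomials by
induction on trees, hence on finitely supported series by linearity, hence everywhere by
continuity: truncations by `x`-degree converge.
-/

theorem List.exists_eq_append_cons_of_lt_length {α : Type*} {t : List α} {k : ℕ}
    (hk : k < t.length) : ∃ u w v, t = u ++ w :: v ∧ u.length = k :=
  ⟨t.take k, t[k], t.drop (k + 1), by rw [List.getElem_cons_drop, List.take_append_drop],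
    by simp; omega⟩

namespace Planar

open Classical PSer

variable {K : Type} [Field K]

@[ext] lemma PSer.ext {f g : PSer K} (h : ∀ S, f.1 S = g.1 S) : f = g :=
  Subtype.ext (funext h)

@[simp] lemma degx_none : degx (none : PT) = 0 := rfl

lemma mono_coeff (S T : PT) : (mono (K := K) S).1 T = if T = S then 1 else 0 := rfl

@[simp] lemma neg_coeff (f : PSer K) (S : PT) : (-f).1 S = -f.1 S := rfl

@[simp] lemma sub_coeff (f f' : PSer K) (S : PT) : (f - f').1 S = f.1 S - f'.1 S := by
  rw [sub_eq_add_neg, add_coeff, neg_coeff, ← sub_eq_add_neg]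

lemma coeff_sum {ι : Type*} (s : Finset ι) (F : ι → PSer K) (T : PT) :
    (∑ i ∈ s, F i).1 T = ∑ i ∈ s, (F i).1 T :=
  map_sum (⟨⟨fun f : PSer K => f.1 T, rfl⟩, fun _ _ => rfl⟩ : PSer K →+ K) F s

section Trees

lemma PTree.countLeaf_node (v : PVar) (a b : PTree) (r : List PTree) :
    PTree.countLeaf v (.node a b r) =
      PTree.countLeaf v a + PTree.countLeaf v b + (r.map (PTree.countLeaf v)).sum := by
  rw [PTree.countLeaf, List.attach_map_val]

lemma degx_some_node (a b : PTree) (r : List PTree) :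
    degx (some (.node a b r)) =
      degx (some a) + degx (some b) + (r.map fun t => degx (some t)).sum := by
  simp [degx, PTree.countLeaf_node]

lemma sum_map_degx_reduceOption (l : List PT) :
    (l.reduceOption.map fun t => degx (some t)).sum = (l.map degx).sum := by
  induction l with
  | nil => rfl
  | cons a l ih =>
    cases a <;> simp [List.reduceOption_cons_of_none, List.reduceOption_cons_of_some, ih]

lemma degx_graft (l : List PT) : degx (graft l) = (l.map degx).sum := by
  rw [← sum_map_degx_reduceOption, graft]
  rcases l.reduceOption with _ | ⟨t₁, _ | ⟨t₂, ts⟩⟩ <;> simp [degx_some_node, add_assoc]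

lemma degx_le_degx_graft {t : List PT} {x : PT} (hx : x ∈ t) : degx x ≤ degx (graft t) := by
  rw [degx_graft]
  exact List.single_le_sum (by simp) _ (List.mem_map_of_mem hx)

lemma graft_singleton (u : PT) : graft [u] = u := by
  cases u <;> rfl

lemma graft_some_cons_some_cons (a b : PTree) (r : List PTree) :
    graft (some a :: some b :: r.map some) = some (.node a b r) := by
  simp [graft, List.reduceOption, List.filterMap_map]

lemma graft_eq_of_reduceOption_eq {t₁ t₂ : List PT}
    (h : t₁.reduceOption = t₂.reduceOption) : graft t₁ = graft t₂ := by
  unfold graft; rw [h]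

end Trees

section Lists

variable {α : Type*} [DecidableEq α]

def listsOver (D : Finset α) : ℕ → Finset (List α)
  | 0 => {[]}
  | m + 1 => (D ×ˢ listsOver D m).image fun p => p.1 :: p.2

lemma mem_listsOver (D : Finset α) :
    ∀ (m : ℕ) (t : List α), t ∈ listsOver D m ↔ t.length = m ∧ ∀ x ∈ t, x ∈ D
  | 0, t => by simp +contextual [listsOver, List.length_eq_zero_iff]
  | m + 1, [] => by simp [listsOver]
  | m + 1, a :: s => by simp [listsOver, mem_listsOver D m s, and_left_comm]

end Lists

section BulletCoeff

def graftFactors : PT → List PT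
  | some (.node a b r) => none :: some (.node a b r) :: (a :: b :: r).map some
  | S => [none, S]

lemma mem_graftFactors_graft {t : List PT} {u : PT} (hu : u ∈ t) :
    u ∈ graftFactors (graft t) := by
  rcases u with _ | v
  · rcases graft t with _ | _ | ⟨a, b, r⟩ <;> simp [graftFactors]
  · have hv : v ∈ t.reduceOption := List.reduceOption_mem_iff.2 hu
    unfold graft
    rcases hr : t.reduceOption with _ | ⟨t₁, _ | ⟨t₂, ts⟩⟩ <;> rw [hr] at hv
    · simp at hv
    · obtain rfl : v = t₁ := by simpa using hv
      rcases v with _ | ⟨a, b, r⟩ <;> simp [graftFactors]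
    · simp only [graftFactors, List.mem_cons, List.mem_map] at hv ⊢
      simp [hv]

noncomputable def graftFiber (m : ℕ) (S : PT) : Finset (List PT) :=
  (listsOver (graftFactors S).toFinset m).filter fun t => graft t = S

lemma mem_graftFiber {m : ℕ} {S : PT} {t : List PT} :
    t ∈ graftFiber m S ↔ t.length = m ∧ graft t = S := by
  simp only [graftFiber, Finset.mem_filter, mem_listsOver, List.mem_toFinset]
  constructor
  · rintro ⟨⟨hl, -⟩, hS⟩
    exact ⟨hl, hS⟩
  · rintro ⟨hl, rfl⟩
    exact ⟨⟨hl, fun _ hu => mem_graftFactors_graft hu⟩, rfl⟩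

def coeffProd (fs : List (PSer K)) (t : List PT) : K :=
  (List.zipWith (fun f u => f.1 u) fs t).prod

@[simp] lemma coeffProd_cons (f : PSer K) (fs : List (PSer K)) (u : PT) (t : List PT) :
    coeffProd (f :: fs) (u :: t) = f.1 u * coeffProd fs t := by
  simp [coeffProd]

lemma coeffProd_append {as bs : List (PSer K)} {u v : List PT} (h : as.length = u.length) :
    coeffProd (as ++ bs) (u ++ v) = coeffProd as u * coeffProd bs v := by
  rw [coeffProd, List.zipWith_append h, List.prod_append, coeffProd, coeffProd]

lemma exists_coeff_ne_zero_of_coeffProd_ne_zero :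
    ∀ {fs : List (PSer K)} {t : List PT}, t.length = fs.length → coeffProd fs t ≠ 0 →
      ∀ x ∈ t, ∃ f ∈ fs, f.1 x ≠ 0
  | [], [], _, _ => by simp
  | f :: fs, u :: t, hl, hP => by
    rw [coeffProd_cons] at hP
    rintro x (_ | ⟨_, hx⟩)
    · exact ⟨f, List.mem_cons_self, left_ne_zero_of_mul hP⟩
    · obtain ⟨f', hf', hx⟩ := exists_coeff_ne_zero_of_coeffProd_ne_zero
        (by simpa using hl) (right_ne_zero_of_mul hP) x hx
      exact ⟨f', List.mem_cons_of_mem f hf', hx⟩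

def supportUpTo (fs : List (PSer K)) (n : ℕ) : Set PT :=
  {S | (∃ f ∈ fs, f.1 S ≠ 0) ∧ degx S ≤ n}

lemma supportUpTo_finite (fs : List (PSer K)) (n : ℕ) : (supportUpTo fs n).Finite :=
  (fs.finite_toSet.biUnion fun f _ => (Set.finite_Iic n).biUnion fun k _ => f.2 k).subset
    fun _ ⟨⟨_, hf, hS⟩, hd⟩ =>
      Set.mem_biUnion hf (Set.mem_biUnion (Set.mem_Iic.2 hd) ⟨hS, rfl⟩)

lemma mem_supportUpTo_of_coeffProd_ne_zero {fs : List (PSer K)} {t : List PT}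
    (hl : t.length = fs.length) (hP : coeffProd fs t ≠ 0) {n : ℕ} (hn : degx (graft t) ≤ n)
    {x : PT} (hx : x ∈ t) : x ∈ supportUpTo fs n :=
  ⟨exists_coeff_ne_zero_of_coeffProd_ne_zero hl hP x hx, (degx_le_degx_graft hx).trans hn⟩

lemma bulletCoeff_eq_sum (fs : List (PSer K)) (S : PT) :
    bulletCoeff fs S = ∑ t ∈ graftFiber fs.length S, coeffProd fs t := by
  have hfiber : {t : List PT | t.length = fs.length ∧ graft t = S} = graftFiber fs.length S := by
    ext t
    exact mem_graftFiber.symm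
  rw [bulletCoeff, hfiber, finsum_mem_coe_finset]
  rfl

lemma bulletCoeff_support_finite (fs : List (PSer K)) (n : ℕ) :
    {S : PT | bulletCoeff fs S ≠ 0 ∧ degx S = n}.Finite := by
  refine ((listsOver (supportUpTo_finite fs n).toFinset fs.length).image graft).finite_toSet.subset
    fun S ⟨hS, hdeg⟩ => ?_
  rw [bulletCoeff_eq_sum] at hS
  obtain ⟨t, ht, hP⟩ := Finset.exists_ne_zero_of_sum_ne_zero hS
  obtain ⟨hl, rfl⟩ := mem_graftFiber.1 ht
  refine Finset.mem_image_of_mem graft ((mem_listsOver _ _ t).2 ⟨hl, fun x hx => ?_⟩)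
  exact (Set.Finite.mem_toFinset _).2 (mem_supportUpTo_of_coeffProd_ne_zero hl hP hdeg.le hx)

lemma coeff_bullet (fs : List (PSer K)) (S : PT) :
    (bullet fs).1 S = ∑ t ∈ graftFiber fs.length S, coeffProd fs t := by
  rw [show bullet fs = ⟨bulletCoeff fs, bulletCoeff_support_finite fs⟩ from dif_pos _]
  exact bulletCoeff_eq_sum fs S

end BulletCoeff

section BulletAlgebra

lemma coeffProd_map_mono : ∀ {l t : List PT}, t.length = l.length →
    coeffProd (l.map (mono (K := K))) t = if t = l then 1 else 0
  | [], [], _ => by simp [coeffProd]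
  | a :: l, u :: t, h => by
    rw [List.map_cons, coeffProd_cons, mono_coeff, coeffProd_map_mono (by simpa using h)]
    by_cases h₁ : u = a <;> by_cases h₂ : t = l <;> simp [h₁, h₂]

lemma bullet_map_mono (l : List PT) : bullet (l.map mono) = mono (K := K) (graft l) := by
  ext S
  rw [coeff_bullet, mono_coeff, Finset.sum_congr rfl fun t ht =>
    coeffProd_map_mono (by simpa using (mem_graftFiber.1 ht).1), Finset.sum_ite_eq']
  simp [mem_graftFiber, eq_comm]

lemma bullet_nil : bullet ([] : List (PSer K)) = onePS :=
  bullet_map_mono []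

lemma graftFiber_one (S : PT) : graftFiber 1 S = {[S]} := by
  ext t
  simp only [mem_graftFiber, Finset.mem_singleton, List.length_eq_one_iff]
  constructor
  · rintro ⟨⟨a, rfl⟩, rfl⟩
    rw [graft_singleton]
  · rintro rfl
    exact ⟨⟨S, rfl⟩, graft_singleton S⟩

lemma bullet_singleton (f : PSer K) : bullet [f] = f := by
  ext S
  rw [coeff_bullet, List.length_singleton, graftFiber_one, Finset.sum_singleton]
  simp [coeffProd]

lemma graft_append_none_cons (u v : List PT) : graft (u ++ none :: v) = graft (u ++ v) := by
  apply graft_eq_of_reduceOption_eq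
  rw [List.reduceOption_append, List.reduceOption_cons_of_none, List.reduceOption_append]

lemma coeffProd_append_onePS_cons {as bs : List (PSer K)} {u v : List PT} (w : PT)
    (h : as.length = u.length) :
    coeffProd (as ++ onePS :: bs) (u ++ w :: v) =
      if w = none then coeffProd (as ++ bs) (u ++ v) else 0 := by
  rw [coeffProd_append h, coeffProd_append h, coeffProd_cons, onePS, mono_coeff]
  split_ifs <;> simp

lemma bullet_append_onePS_cons (as bs : List (PSer K)) :
    bullet (as ++ onePS :: bs) = bullet (as ++ bs) := by
  ext S
  simp only [coeff_bullet]
  set k := as.length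
  symm
  -- inserting `1_P` at position `k` matches the right-hand terms with the nonzero left-hand ones
  refine Finset.sum_bij_ne_zero (fun t _ _ => t.take k ++ none :: t.drop k) ?_ ?_ ?_ ?_
  · intro t ht _
    obtain ⟨hl, hS⟩ := mem_graftFiber.1 ht
    refine mem_graftFiber.2 ⟨?_, ?_⟩
    · simp only [List.length_append, List.length_cons] at hl ⊢
      simp only [List.length_take, List.length_drop]
      omega
    · rw [graft_append_none_cons, List.take_append_drop, hS]
  · intro t₁ h₁ _ t₂ h₂ _ h
    have hl₁ := (mem_graftFiber.1 h₁).1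
    have hl₂ := (mem_graftFiber.1 h₂).1
    obtain ⟨htake, hdrop⟩ := List.append_inj h (by simp at hl₁ hl₂ ⊢; omega)
    rw [← List.take_append_drop k t₁, ← List.take_append_drop k t₂, htake,
      (List.cons_inj_right none).1 hdrop]
  · intro t ht hP
    obtain ⟨hl, hS⟩ := mem_graftFiber.1 ht
    obtain ⟨u, w, v, rfl, hu⟩ :=
      List.exists_eq_append_cons_of_lt_length (t := t) (k := k) (by simp at hl ⊢; omega)
    rw [coeffProd_append_onePS_cons w hu.symm] at hP
    obtain rfl : w = none := by by_contra hw; exact hP (if_neg hw)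
    refine ⟨u ++ v, mem_graftFiber.2 ⟨?_, ?_⟩, by rwa [if_pos rfl] at hP, ?_⟩
    · simp only [List.length_append, List.length_cons] at hl ⊢
      omega
    · rw [← graft_append_none_cons, hS]
    · simp [List.take_left' hu, List.drop_left' hu]
  · intro t ht _
    have hk : as.length = (t.take k).length := by
      have hl := (mem_graftFiber.1 ht).1
      simp at hl ⊢
      omega
    rw [coeffProd_append_onePS_cons none hk, if_pos rfl, List.take_append_drop]

lemma bullet_append_map (ρ : PT → PSer K) (hρ : ρ none = onePS) :
    ∀ (l : List PT) (as : List (PSer K)),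
      bullet (as ++ l.map ρ) = bullet (as ++ l.reduceOption.map (ρ ∘ some))
  | [], _ => rfl
  | none :: l, as => by
    rw [List.map_cons, hρ, List.reduceOption_cons_of_none, bullet_append_onePS_cons]
    exact bullet_append_map ρ hρ l as
  | some t :: l, as => by
    simpa [List.reduceOption_cons_of_some] using bullet_append_map ρ hρ l (as ++ [ρ (some t)])

end BulletAlgebra

section Order

lemma ordx_le_degx (f : PSer K) {S : PT} (hS : f.1 S ≠ 0) : ordx f ≤ degx S :=
  iInf₂_le S hS

lemma le_ordx {f : PSer K} {n : ℕ∞} (hn : ∀ S, f.1 S ≠ 0 → n ≤ degx S) : n ≤ ordx f :=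
  le_iInf₂ hn

lemma sum_ordx_le_of_coeffProd_ne_zero : ∀ {fs : List (PSer K)} {u : List PT},
    u.length = fs.length → coeffProd fs u ≠ 0 → (fs.map ordx).sum ≤ ((u.map degx).sum : ℕ)
  | [], [], _, _ => by simp
  | f :: fs, v :: u, hl, hP => by
    rw [coeffProd_cons] at hP
    simp only [List.map_cons, List.sum_cons, Nat.cast_add]
    exact add_le_add (ordx_le_degx f (left_ne_zero_of_mul hP))
      (sum_ordx_le_of_coeffProd_ne_zero (by simpa using hl) (right_ne_zero_of_mul hP))

lemma sum_ordx_le_ordx_bullet (fs : List (PSer K)) : (fs.map ordx).sum ≤ ordx (bullet fs) := by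
  refine le_ordx fun T hT => ?_
  rw [coeff_bullet] at hT
  obtain ⟨u, hu, hP⟩ := Finset.exists_ne_zero_of_sum_ne_zero hT
  obtain ⟨hl, rfl⟩ := mem_graftFiber.1 hu
  rw [degx_graft]
  exact sum_ordx_le_of_coeffProd_ne_zero hl hP

end Order

section XAdic

lemma ordx_neg (f : PSer K) : ordx (-f) = ordx f := by
  simp [ordx]

lemma distx_comm (f f' : PSer K) : distx f f' = distx f' f := by
  rw [distx, distx, ← neg_sub, normx, normx, ordx_neg]

lemma eq_zero_of_ordx_eq_top {f : PSer K} (hf : ordx f = ⊤) : f = 0 := by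
  ext S
  by_contra hS
  exact ENat.natCast_ne_top _ (top_le_iff.1 (hf ▸ ordx_le_degx f hS))

lemma normx_nonneg (f : PSer K) : 0 ≤ normx f := by
  unfold normx
  split_ifs <;> positivity

lemma eq_zero_of_normx_eq_zero {f : PSer K} (hf : normx f = 0) : f = 0 := by
  refine eq_zero_of_ordx_eq_top (by_contra fun htop => ?_)
  rw [normx, if_neg htop] at hf
  exact absurd hf (by positivity)

lemma normx_le_normx_of_ordx_le {f f' : PSer K} (h : ordx f ≤ ordx f') :
    normx f' ≤ normx f := by
  by_cases htop : ordx f' = ⊤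
  · rw [normx, if_pos htop]
    exact normx_nonneg f
  · rw [normx, if_neg htop, normx, if_neg (ne_top_of_le_ne_top htop h)]
    exact pow_le_pow_of_le_one (by norm_num) (by norm_num) (ENat.toNat_le_toNat h htop)

lemma normx_le_pow_of_le_ordx {f : PSer K} {N : ℕ} (h : (N : ℕ∞) ≤ ordx f) :
    normx f ≤ (2⁻¹ : ℝ) ^ N := by
  unfold normx
  split_ifs with htop
  · positivity
  · exact pow_le_pow_of_le_one (by norm_num) (by norm_num)
      (by simpa using ENat.toNat_le_toNat h htop)

lemma min_ordx_le_ordx_add (f f' : PSer K) : min (ordx f) (ordx f') ≤ ordx (f + f') := by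
  refine le_ordx fun S hS => ?_
  rw [add_coeff] at hS
  by_cases hf : f.1 S = 0
  · rw [hf, zero_add] at hS
    exact (min_le_right _ _).trans (ordx_le_degx f' hS)
  · exact (min_le_left _ _).trans (ordx_le_degx f hf)

lemma normx_add_le_max (f f' : PSer K) : normx (f + f') ≤ max (normx f) (normx f') := by
  rcases min_cases (ordx f) (ordx f') with ⟨hmin, -⟩ | ⟨hmin, -⟩
  · exact le_max_of_le_left (normx_le_normx_of_ordx_le (hmin ▸ min_ordx_le_ordx_add f f'))
  · exact le_max_of_le_right (normx_le_normx_of_ordx_le (hmin ▸ min_ordx_le_ordx_add f f'))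

lemma contWrt_of_ordx_le (φ : PSer K →ₗ[K] PSer K) (hφ : ∀ f, ordx f ≤ ordx (φ f)) :
    ContWrt distx distx φ :=
  fun _ ε hε => ⟨ε, hε, fun _ hb => by
    rw [distx, ← map_sub]
    exact (normx_le_normx_of_ordx_le (hφ _)).trans_lt hb⟩

lemma coeff_sum_comp_range (f : PSer K) (N : ℕ) (S : PT) :
    (∑ n ∈ Finset.range N, comp f n).1 S = if degx S < N then f.1 S else 0 := by
  rw [coeff_sum]
  exact (Finset.sum_ite_eq (Finset.range N) (degx S) fun _ => f.1 S).trans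
    (if_congr Finset.mem_range rfl rfl)

lemma exists_support_finite_distx_lt (f : PSer K) {δ : ℝ} (hδ : 0 < δ) :
    ∃ t : PSer K, (Function.support t.1).Finite ∧ distx t f < δ := by
  obtain ⟨N, hN⟩ := exists_pow_lt_of_lt_one hδ (by norm_num : (2⁻¹ : ℝ) < 1)
  refine ⟨∑ n ∈ Finset.range N, comp f n, ?_, ?_⟩
  · refine ((Set.finite_Iio N).biUnion fun k _ => f.2 k).subset fun S hS => ?_
    rw [Function.mem_support, coeff_sum_comp_range] at hS
    split_ifs at hS with hd
    · exact Set.mem_biUnion hd ⟨hS, rfl⟩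
    · exact absurd rfl hS
  · refine (normx_le_pow_of_le_ordx (le_ordx fun S hS => ?_)).trans_lt hN
    rw [sub_coeff, coeff_sum_comp_range] at hS
    split_ifs at hS with hd
    · exact absurd (sub_self _) hS
    · exact_mod_cast not_lt.1 hd

lemma eq_of_contWrt_of_eq_of_support_finite {φ ψ : PSer K → PSer K}
    (hφ : ContWrt distx distx φ) (hψ : ContWrt distx distx ψ)
    (h : ∀ f : PSer K, (Function.support f.1).Finite → φ f = ψ f) : φ = ψ := by
  funext f
  by_contra hne
  have hε : 0 < normx (φ f - ψ f) := (normx_nonneg _).lt_of_ne'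
    fun h0 => hne (sub_eq_zero.1 (eq_zero_of_normx_eq_zero h0))
  obtain ⟨δ₁, hδ₁, H₁⟩ := hφ f _ hε
  obtain ⟨δ₂, hδ₂, H₂⟩ := hψ f _ hε
  obtain ⟨t, ht, htf⟩ := exists_support_finite_distx_lt f (lt_min hδ₁ hδ₂)
  have h₁ : distx (φ f) (φ t) < normx (φ f - ψ f) := by
    rw [distx_comm]
    exact H₁ t (htf.trans_le (min_le_left _ _))
  have h₂ : distx (ψ t) (ψ f) < normx (φ f - ψ f) := H₂ t (htf.trans_le (min_le_right _ _))
  have hsplit : φ f - ψ f = (φ f - φ t) + (ψ t - ψ f) := by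
    rw [h t ht]
    abel
  have := (normx_add_le_max _ _).trans_lt (max_lt h₁ h₂)
  rw [← hsplit] at this
  exact lt_irrefl _ this

end XAdic

section Substitution

variable (g h : PSer K)

noncomputable def substTree : PTree → PSer K
  | .leaf .vx => g
  | .leaf .vy => h
  | .node t₁ t₂ rest =>
      bullet (substTree t₁ :: substTree t₂ :: rest.attach.map fun t => substTree t.1)
decreasing_by
  all_goals simp_wf
  · omega
  · omega
  · have := List.sizeOf_lt_of_mem t.2
    omega

lemma substTree_node (a b : PTree) (r : List PTree) :
    substTree g h (.node a b r) = bullet ((a :: b :: r).map (substTree g h)) := by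
  rw [substTree, List.map_cons, List.map_cons, List.attach_map_val]

noncomputable def substMono (S : PT) : PSer K := S.elim onePS (substTree g h)

lemma substMono_graft (l : List PT) :
    substMono g h (graft l) = bullet (l.map (substMono g h)) := by
  rw [← List.nil_append (l.map _), bullet_append_map (substMono g h) rfl, List.nil_append, graft]
  rcases l.reduceOption with _ | ⟨t₁, _ | ⟨t₂, ts⟩⟩
  · exact bullet_nil.symm
  · exact (bullet_singleton _).symm
  · exact substTree_node g h t₁ t₂ ts

lemma degx_le_ordx_substTree (hg : 1 ≤ ordx g) :
    ∀ t : PTree, (PTree.countLeaf .vx t : ℕ∞) ≤ ordx (substTree g h t)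
  | .leaf .vx => by simpa [PTree.countLeaf, substTree] using hg
  | .leaf .vy => by simp [PTree.countLeaf]
  | .node a b r => by
    rw [substTree_node]
    refine le_trans ?_ (sum_ordx_le_ordx_bullet _)
    rw [PTree.countLeaf_node, List.map_map]
    push_cast
    simp only [List.map_cons, List.sum_cons, List.map_map, add_assoc]
    gcongr
    · exact degx_le_ordx_substTree hg a
    · exact degx_le_ordx_substTree hg b
    · exact List.sum_le_sum fun c hc => degx_le_ordx_substTree hg c

lemma degx_le_ordx_substMono (hg : 1 ≤ ordx g) (S : PT) :
    (degx S : ℕ∞) ≤ ordx (substMono g h S) := by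
  cases S with
  | none => simp
  | some t => exact degx_le_ordx_substTree g h hg t

lemma degx_le_of_coeff_substMono_ne_zero (hg : 1 ≤ ordx g) {S T : PT}
    (hT : (substMono g h S).1 T ≠ 0) : degx S ≤ degx T := by
  exact_mod_cast (degx_le_ordx_substMono g h hg S).trans (ordx_le_degx _ hT)

end Substitution

section SubstMap

variable (g h : PSer K)

lemma support_substTerm_subset (hg : 1 ≤ ordx g) (f : PSer K) {T : PT} {n : ℕ}
    (hT : degx T ≤ n) :
    Function.support (fun S => f.1 S * (substMono g h S).1 T) ⊆ supportUpTo [f] n :=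
  fun _ hS => ⟨⟨f, List.mem_singleton_self f, left_ne_zero_of_mul hS⟩,
    (degx_le_of_coeff_substMono_ne_zero g h hg (right_ne_zero_of_mul hS)).trans hT⟩

lemma substTerm_support_finite (hg : 1 ≤ ordx g) (f : PSer K) (T : PT) :
    (Function.support fun S => f.1 S * (substMono g h S).1 T).Finite :=
  (supportUpTo_finite [f] (degx T)).subset (support_substTerm_subset g h hg f le_rfl)

lemma substCoeff_support_finite (hg : 1 ≤ ordx g) (f : PSer K) (n : ℕ) :
    {T : PT | ∑ᶠ S, f.1 S * (substMono g h S).1 T ≠ 0 ∧ degx T = n}.Finite := by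
  refine ((supportUpTo_finite [f] n).biUnion fun S _ => (substMono g h S).2 n).subset ?_
  rintro T ⟨hT, rfl⟩
  obtain ⟨S, hS⟩ : ∃ S, f.1 S * (substMono g h S).1 T ≠ 0 := by
    by_contra! hzero
    exact hT (finsum_eq_zero_of_forall_eq_zero hzero)
  exact Set.mem_biUnion (support_substTerm_subset g h hg f le_rfl hS)
    ⟨right_ne_zero_of_mul hS, rfl⟩

noncomputable def substMap (hg : 1 ≤ ordx g) : PSer K →ₗ[K] PSer K where
  toFun f :=
    ⟨fun T => ∑ᶠ S, f.1 S * (substMono g h S).1 T, substCoeff_support_finite g h hg f⟩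
  map_add' f₁ f₂ := by
    ext T
    simp only [add_coeff, add_mul]
    exact finsum_add_distrib (substTerm_support_finite g h hg f₁ T)
      (substTerm_support_finite g h hg f₂ T)
  map_smul' a f := by
    ext T
    change ∑ᶠ S, a * f.1 S * _ = a * ∑ᶠ S, _
    rw [mul_finsum _ a]
    simp only [mul_assoc]

variable (hg : 1 ≤ ordx g)

lemma coeff_substMap (f : PSer K) (T : PT) :
    (substMap g h hg f).1 T = ∑ᶠ S, f.1 S * (substMono g h S).1 T :=
  rfl

lemma coeff_substMap_eq_sum {f : PSer K} {n : ℕ} {D : Finset PT} (hD : supportUpTo [f] n ⊆ D)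
    {T : PT} (hT : degx T ≤ n) :
    (substMap g h hg f).1 T = ∑ S ∈ D, f.1 S * (substMono g h S).1 T :=
  finsum_eq_sum_of_support_subset _ ((support_substTerm_subset g h hg f hT).trans hD)

lemma substMap_mono (S₀ : PT) : substMap g h hg (mono S₀) = substMono g h S₀ := by
  ext T
  rw [coeff_substMap, finsum_eq_single _ S₀ fun S hS => by rw [mono_coeff, if_neg hS, zero_mul],
    mono_coeff, if_pos rfl, one_mul]

lemma ordx_le_ordx_substMap (f : PSer K) : ordx f ≤ ordx (substMap g h hg f) := by
  refine le_ordx fun T hT => ?_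
  have hD := (supportUpTo_finite [f] (degx T)).coe_toFinset.superset
  rw [coeff_substMap_eq_sum g h hg hD le_rfl] at hT
  obtain ⟨S, -, hS⟩ := Finset.exists_ne_zero_of_sum_ne_zero hT
  exact (ordx_le_degx f (left_ne_zero_of_mul hS)).trans
    (by exact_mod_cast degx_le_of_coeff_substMono_ne_zero g h hg (right_ne_zero_of_mul hS))

end SubstMap

section GraftCompat

lemma supportUpTo_mono {fs fs' : List (PSer K)} (h : fs ⊆ fs') (n : ℕ) :
    supportUpTo fs n ⊆ supportUpTo fs' n :=
  fun _ ⟨⟨f, hf, hS⟩, hd⟩ => ⟨⟨f, h hf, hS⟩, hd⟩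

lemma coeff_bullet_eq_sum_listsOver (fs : List (PSer K)) {S : PT} {n : ℕ} (hS : degx S ≤ n)
    {D : Finset PT} (hD : supportUpTo fs n ⊆ D) :
    (bullet fs).1 S = ∑ t ∈ listsOver D fs.length with graft t = S, coeffProd fs t := by
  rw [coeff_bullet]
  symm
  refine Finset.sum_subset (fun t ht => ?_) (fun t ht hnot => ?_)
  · obtain ⟨hL, hS'⟩ := Finset.mem_filter.1 ht
    exact mem_graftFiber.2 ⟨((mem_listsOver D _ t).1 hL).1, hS'⟩
  · obtain ⟨hl, rfl⟩ := mem_graftFiber.1 ht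
    by_contra hP
    exact hnot (Finset.mem_filter.2 ⟨(mem_listsOver D _ t).2
      ⟨hl, fun x hx => hD (mem_supportUpTo_of_coeffProd_ne_zero hl hP hS hx)⟩, rfl⟩)

lemma finsum_coeff_bullet_mul (fs : List (PSer K)) {n : ℕ} {D : Finset PT}
    (hD : supportUpTo fs n ⊆ D) (F : PT → K) (hF : ∀ S, F S ≠ 0 → degx S ≤ n) :
    ∑ᶠ S, (bullet fs).1 S * F S =
      ∑ σ ∈ listsOver D fs.length, coeffProd fs σ * F (graft σ) := by
  have hsupp : Function.support (fun S => (bullet fs).1 S * F S) ⊆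
      (listsOver D fs.length).image graft := by
    intro S (hS : (bullet fs).1 S * F S ≠ 0)
    rw [coeff_bullet_eq_sum_listsOver fs (hF S (right_ne_zero_of_mul hS)) hD] at hS
    obtain ⟨t, ht, -⟩ := Finset.exists_ne_zero_of_sum_ne_zero (left_ne_zero_of_mul hS)
    obtain ⟨hL, rfl⟩ := Finset.mem_filter.1 ht
    exact Finset.mem_image_of_mem graft hL
  rw [finsum_eq_sum_of_support_subset _ hsupp,
    ← Finset.sum_fiberwise_of_maps_to fun t ht => Finset.mem_image_of_mem graft ht]
  refine Finset.sum_congr rfl fun S _ => ?_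
  have hfiber : ∑ t ∈ listsOver D fs.length with graft t = S, coeffProd fs t * F (graft t) =
      (∑ t ∈ listsOver D fs.length with graft t = S, coeffProd fs t) * F S := by
    rw [Finset.sum_mul]
    exact Finset.sum_congr rfl fun t ht => by rw [(Finset.mem_filter.1 ht).2]
  rw [hfiber]
  by_cases hFS : F S = 0
  · rw [hFS, mul_zero, mul_zero]
  · rw [coeff_bullet_eq_sum_listsOver fs (hF S hFS) hD]

variable (g h : PSer K) (hg : 1 ≤ ordx g)

lemma coeffProd_map_substMap {n : ℕ} {D : Finset PT} :
    ∀ (fs : List (PSer K)) (u : List PT), u.length = fs.length → (∀ v ∈ u, degx v ≤ n) →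
      supportUpTo fs n ⊆ D →
      coeffProd (fs.map (substMap g h hg)) u =
        ∑ σ ∈ listsOver D fs.length, coeffProd fs σ * coeffProd (σ.map (substMono g h)) u
  | [], [], _, _, _ => by simp [listsOver, coeffProd]
  | f :: fs, v :: u, hl, hu, hD => by
    have hf : supportUpTo [f] n ⊆ D := (supportUpTo_mono (by simp) n).trans hD
    have hfs : supportUpTo fs n ⊆ D := (supportUpTo_mono (List.subset_cons_self f fs) n).trans hD
    rw [List.map_cons, coeffProd_cons, coeff_substMap_eq_sum g h hg hf (hu v List.mem_cons_self),
      coeffProd_map_substMap fs u (by simpa using hl) (fun w hw => hu w (.tail v hw)) hfs,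
      List.length_cons, listsOver, Finset.sum_image fun p _ q _ hpq =>
        Prod.ext (List.cons_eq_cons.1 hpq).1 (List.cons_eq_cons.1 hpq).2,
      Finset.sum_product, Finset.sum_mul_sum]
    refine Finset.sum_congr rfl fun S _ => Finset.sum_congr rfl fun σ _ => ?_
    simp only [List.map_cons, coeffProd_cons]
    ring

lemma substMap_bullet (fs : List (PSer K)) :
    substMap g h hg (bullet fs) = bullet (fs.map (substMap g h hg)) := by
  ext T
  set L := listsOver (supportUpTo_finite fs (degx T)).toFinset fs.length
  have hD := (supportUpTo_finite fs (degx T)).coe_toFinset.superset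
  calc (substMap g h hg (bullet fs)).1 T
      = ∑ σ ∈ L, coeffProd fs σ * (substMono g h (graft σ)).1 T :=
        finsum_coeff_bullet_mul fs hD _ fun _ hS =>
          degx_le_of_coeff_substMono_ne_zero g h hg hS
    _ = ∑ σ ∈ L, ∑ u ∈ graftFiber fs.length T,
          coeffProd fs σ * coeffProd (σ.map (substMono g h)) u := by
        refine Finset.sum_congr rfl fun σ hσ => ?_
        rw [substMono_graft, coeff_bullet, Finset.mul_sum, List.length_map,
          ((mem_listsOver _ _ σ).1 hσ).1]
    _ = ∑ u ∈ graftFiber fs.length T, coeffProd (fs.map (substMap g h hg)) u := by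
        rw [Finset.sum_comm]
        refine Finset.sum_congr rfl fun u hu => ?_
        obtain ⟨hl, rfl⟩ := mem_graftFiber.1 hu
        exact (coeffProd_map_substMap g h hg fs u hl (fun v hv => degx_le_degx_graft hv) hD).symm
    _ = (bullet (fs.map (substMap g h hg))).1 T := by
        rw [coeff_bullet, List.length_map]

end GraftCompat

lemma eq_sum_smul_mono (f : PSer K) {E : Finset PT} (hE : Function.support f.1 ⊆ E) :
    f = ∑ S ∈ E, f.1 S • mono S := by
  ext T
  simp only [coeff_sum, smul_coeff, mono_coeff, mul_ite, mul_one, mul_zero, Finset.sum_ite_eq]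
  split_ifs with hT
  · rfl
  · exact not_not.1 fun h => hT (hE h)

lemma mono_some_node (a b : PTree) (r : List PTree) :
    mono (K := K) (some (.node a b r)) = bullet ((a :: b :: r).map fun c => mono (some c)) := by
  rw [← graft_some_cons_some_cons, ← bullet_map_mono]
  simp [Function.comp_def]

lemma isSubstHom_substMap (g h : PSer K) (hg : 1 ≤ ordx g) :
    IsSubstHom g h (substMap g h hg) where
  linear := (substMap g h hg).isLinear
  map_graft fs _ := substMap_bullet g h hg fs
  map_one := substMap_mono g h hg none
  map_X := by rw [Xps, substMap_mono, substMono, Option.elim, substTree]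
  map_Y := by rw [Yps, substMap_mono, substMono, Option.elim, substTree]
  cont := contWrt_of_ordx_le _ (ordx_le_ordx_substMap g h hg)

namespace IsSubstHom

variable {g h : PSer K} {φ : PSer K → PSer K}

lemma map_mono_some (hφ : IsSubstHom g h φ) : ∀ t : PTree, φ (mono (some t)) = substTree g h t
  | .leaf .vx => by rw [substTree]; exact hφ.map_X
  | .leaf .vy => by rw [substTree]; exact hφ.map_Y
  | .node a b r => by
    rw [mono_some_node, hφ.map_graft _ (by simp), List.map_map, substTree_node]
    exact congrArg bullet (List.map_congr_left fun c hc => hφ.map_mono_some c)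
decreasing_by
  all_goals simp_wf
  rcases List.mem_cons.1 hc with rfl | hc
  · omega
  rcases List.mem_cons.1 hc with rfl | hc
  · omega
  · have := List.sizeOf_lt_of_mem hc
    omega

lemma map_mono (hφ : IsSubstHom g h φ) (S : PT) : φ (mono S) = substMono g h S := by
  cases S with
  | none => exact hφ.map_one
  | some t => exact hφ.map_mono_some t

lemma eq_substMap_of_support_finite (hφ : IsSubstHom g h φ) (hg : 1 ≤ ordx g) {f : PSer K}
    (hf : (Function.support f.1).Finite) : φ f = substMap g h hg f := by
  rw [eq_sum_smul_mono f hf.coe_toFinset.superset]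
  change IsLinearMap.mk' φ hφ.linear _ = _
  simp only [map_sum, map_smul, IsLinearMap.mk'_apply, hφ.map_mono, substMap_mono]

lemma eq_substMap (hφ : IsSubstHom g h φ) (hg : 1 ≤ ordx g) : φ = substMap g h hg :=
  eq_of_contWrt_of_eq_of_support_finite hφ.cont (isSubstHom_substMap g h hg).cont
    fun _ hf => hφ.eq_substMap_of_support_finite hg hf

end IsSubstHom

end Planar

open Planar in
/-- For `g, h ∈ K{{x,y}` with `ord_x(g) ≥ 1` there is a unique `K`-linear,
grafting-compatible, unital, `x`-adically continuous map `φ : K{{x,y} → K{{x,y}` with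
`φ(x) = g` and `φ(y) = h` (the substitution homomorphism `φ_{(g,h)}`). -/
theorem planar_substHom_exists_unique (K : Type) [Field K]
    (g h : PSer K) (hg : 1 ≤ ordx g) :
    ∃! φ : PSer K → PSer K, IsSubstHom g h φ :=
  ⟨substMap g h hg, isSubstHom_substMap g h hg, fun _ hφ => hφ.eq_substMap hg⟩
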